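/- Let m ≥ 1 and let c¹, …, c^{m+1} : ℝ² → ℝ be smooth with c^i ≠ c^j everywhere for i ≠ j. Let (γ_{jk}) be the (m+1)×(m+1) matrix with entries γ_{11} = c¹_x + Σ_{j=2}^{m+1} (c¹_x − c^j_x)/(c¹ − c^j); γ_{1k} = −(c¹_x − c^k_x)/(c¹ − c^k); γ_{k1} = m·(c¹_x − c^k_x)/(c¹ − c^k); γ_{kk} = c^k_x − m·(c¹_x − c^k_x)/(c¹ − c^k) + Σ_{j=2, j≠k}^{m+1} (c^k_x − c^j_x)/(c^k − c^j); and γ_{ki} = −(c^k_x − c^i_x)/(c^k − c^i) for k ≠ i, k, i ∈ {2, …, m+1}. Then at every point, for every j = 1, …, m+1: Σ_{k=1}^{m+1} γ_{jk}·c^k = c^j·c^j_x + m·c¹_x − c²_x − ⋯ − c^{m+1}_x. In other words, the recursion operator R = (γ_{jk})·∂_x^{−1} maps the translational symmetry (c¹_x, …, c^{m+1}_x) (with antiderivative (c¹, …, c^{m+1})) to the right-hand side of the system (Wc). -/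
import Mathlib


/-- Partial derivative with respect to the first (space) variable. -/
noncomputable def pdx (f : ℝ → ℝ → ℝ) (x t : ℝ) : ℝ := deriv (fun y => f y t) x

/-- Partial derivative with respect to the second (time) variable. -/
noncomputable def pdt (f : ℝ → ℝ → ℝ) (x t : ℝ) : ℝ := deriv (fun s => f x s) t

/-- The `(m+1)×(m+1)` matrix `(γ_{jk})` of the recursion operator
`R = (γ_{jk}) ∂_x⁻¹` in the variables `c¹, …, c^{m+1}`, built from the values
`C j = c^{j+1}` and `Cx j = c^{j+1}_x` at a given point; index `0`
corresponds to `c¹`. -/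
noncomputable def gammaMat (m : ℕ) (C Cx : Fin (m + 1) → ℝ)
    (r c : Fin (m + 1)) : ℝ :=
  if r = 0 then
    if c = 0 then Cx 0 + ∑ l : Fin m, (Cx 0 - Cx l.succ) / (C 0 - C l.succ)
    else -((Cx 0 - Cx c) / (C 0 - C c))
  else
    if c = 0 then (m : ℝ) * ((Cx 0 - Cx r) / (C 0 - C r))
    else if r = c then
      Cx r - (m : ℝ) * ((Cx 0 - Cx r) / (C 0 - C r)) +
        ∑ l : Fin m, (if l.succ = r then 0 else (Cx r - Cx l.succ) / (C r - C l.succ))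
    else -((Cx r - Cx c) / (C r - C c))

lemma key (m : ℕ) (C Cx : Fin (m + 1) → ℝ)
    (h : ∀ i j : Fin (m + 1), i ≠ j → C i ≠ C j) (j : Fin (m + 1)) :
    ∑ k : Fin (m + 1), gammaMat m C Cx j k * C k =
      C j * Cx j + m * Cx 0 - ∑ l : Fin m, Cx l.succ := by
  have hq : ∀ a b : Fin (m+1), a ≠ b →
      (Cx a - Cx b) / (C a - C b) * (C a - C b) = Cx a - Cx b := fun a b hab =>
    div_mul_cancel₀ _ (sub_ne_zero.mpr (h a b hab))
  induction j using Fin.cases with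
  | zero =>
    simp only [gammaMat, if_pos rfl]
    rw [Fin.sum_univ_succ]
    simp only [if_pos rfl, Fin.succ_ne_zero, if_neg (Fin.succ_ne_zero _), if_true, if_false]
    have e1 : (∑ x : Fin m, -((Cx 0 - Cx x.succ) / (C 0 - C x.succ)) * C x.succ)
        = ∑ x : Fin m, ((Cx 0 - Cx x.succ)
            - (Cx 0 - Cx x.succ) / (C 0 - C x.succ) * C 0) :=
      Finset.sum_congr rfl fun x _ => by
        linear_combination hq 0 x.succ (Fin.succ_ne_zero x).symm
    rw [e1, Finset.sum_sub_distrib, Finset.sum_sub_distrib, Finset.sum_const,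
      Finset.card_univ, Fintype.card_fin, nsmul_eq_mul, add_mul, Finset.sum_mul]
    ring
  | succ s =>
    have hs0 : (s.succ : Fin (m+1)) ≠ 0 := Fin.succ_ne_zero s
    simp only [gammaMat, if_neg hs0]
    rw [Fin.sum_univ_succ]
    simp only [if_pos rfl, if_neg (Fin.succ_ne_zero _), Fin.succ_inj, if_true]
    have hT : (∑ l' : Fin m, if l' = s then 0
          else (Cx s.succ - Cx l'.succ) / (C s.succ - C l'.succ))
        = ∑ l' ∈ Finset.univ.erase s,
            (Cx s.succ - Cx l'.succ) / (C s.succ - C l'.succ) := by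
      rw [← Finset.add_sum_erase Finset.univ (fun l' : Fin m => if l' = s then 0
        else (Cx s.succ - Cx l'.succ) / (C s.succ - C l'.succ)) (Finset.mem_univ s)]
      simp only [eq_self_iff_true, if_true, zero_add]
      exact Finset.sum_congr rfl fun l hl => by
        rw [if_neg (Finset.ne_of_mem_erase hl)]
    rw [← Finset.add_sum_erase Finset.univ (fun x : Fin m =>
        (if s = x then
            Cx s.succ - (m : ℝ) * ((Cx 0 - Cx s.succ) / (C 0 - C s.succ)) +
              ∑ l' : Fin m, (if l' = s then 0
                else (Cx s.succ - Cx l'.succ) / (C s.succ - C l'.succ))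
          else -((Cx s.succ - Cx x.succ) / (C s.succ - C x.succ))) * C x.succ)
        (Finset.mem_univ s), if_pos rfl, hT]
    have hrest : (∑ l ∈ Finset.univ.erase s,
          (if s = l then
              Cx s.succ - (m : ℝ) * ((Cx 0 - Cx s.succ) / (C 0 - C s.succ)) +
                ∑ l' ∈ Finset.univ.erase s,
                  (Cx s.succ - Cx l'.succ) / (C s.succ - C l'.succ)
            else -((Cx s.succ - Cx l.succ) / (C s.succ - C l.succ))) * C l.succ)
        = ∑ l ∈ Finset.univ.erase s,
            -((Cx s.succ - Cx l.succ) / (C s.succ - C l.succ)) * C l.succ :=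
      Finset.sum_congr rfl fun l hl => by
        rw [if_neg (Finset.ne_of_mem_erase hl).symm]
    rw [hrest]
    have hr0 : (Cx 0 - Cx s.succ) / (C 0 - C s.succ) * (C 0 - C s.succ)
        = Cx 0 - Cx s.succ := hq 0 s.succ hs0.symm
    have hmerge : (∑ l ∈ Finset.univ.erase s,
          (Cx s.succ - Cx l.succ) / (C s.succ - C l.succ)) * C s.succ +
        ∑ l ∈ Finset.univ.erase s,
          -((Cx s.succ - Cx l.succ) / (C s.succ - C l.succ)) * C l.succ
        = ∑ l ∈ Finset.univ.erase s, (Cx s.succ - Cx l.succ) := by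
      rw [Finset.sum_mul, ← Finset.sum_add_distrib]
      exact Finset.sum_congr rfl fun l hl => by
        linear_combination hq s.succ l.succ
          ((Fin.succ_injective m).ne (Finset.ne_of_mem_erase hl).symm)
    have hsum2 : (∑ l ∈ Finset.univ.erase s, (Cx s.succ - Cx l.succ))
        = m * Cx s.succ - ∑ l : Fin m, Cx l.succ := by
      have h0 : (∑ l ∈ Finset.univ.erase s, (Cx s.succ - Cx l.succ))
          = ∑ l : Fin m, (Cx s.succ - Cx l.succ) := by
        rw [← Finset.add_sum_erase Finset.univ _ (Finset.mem_univ s)]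
        simp
      rw [h0, Finset.sum_sub_distrib, Finset.sum_const, Finset.card_univ,
        Fintype.card_fin, nsmul_eq_mul]
    linear_combination hmerge + hsum2 + (m : ℝ) * hr0

/-- the recursion operator `R = (γ_{jk}) ∂_x⁻¹` maps the
translational symmetry `(c¹_x, …, c^{m+1}_x)` (with antiderivative
`(c¹, …, c^{m+1})`) to the right-hand side of the system (Wc): at every point,
for every `j`, `∑_k γ_{jk} c^k = c^j c^j_x + m c¹_x - c²_x - ⋯ - c^{m+1}_x`. -/
theorem statement11 (m : ℕ) (hm : 1 ≤ m)
    (c : Fin (m + 1) → ℝ → ℝ → ℝ)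
    (hc : ∀ j, ContDiff ℝ (⊤ : ℕ∞) (fun q : ℝ × ℝ => c j q.1 q.2))
    (hne : ∀ i j, i ≠ j → ∀ x t, c i x t ≠ c j x t) :
    ∀ (x t : ℝ) (j : Fin (m + 1)),
      (∑ k : Fin (m + 1),
          gammaMat m (fun i => c i x t) (fun i => pdx (c i) x t) j k * c k x t) =
        c j x t * pdx (c j) x t + m * pdx (c 0) x t -
          ∑ l : Fin m, pdx (c l.succ) x t := by
  intro x t j
  exact key m (fun i => c i x t) (fun i => pdx (c i) x t)
    (fun i j hij => hne i j hij x t) j
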